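/- Let L be an n×N matrix over F_q for the index coding problem (m, n, χ, f) with hypergraph vector set I(q,H) = { z ∈ F_q^n : ∃ i ∈ {1,...,m}, z_{χ_i} = 0 and z_{f(i)} ≠ 0 }. Then L corresponds to a δ-error correcting index code (i.e., for all i and all z with z_{χ_i}=0, z_{f(i)}≠0, and all e ∈ F_q^N with wt(e) ≤ 2δ, zL + e ≠ 0) if and only if wt(zL) ≥ 2δ + 1 for every z ∈ I(q,H). -/
import Mathlib


open Matrix

/-- Hamming weight of a vector. -/
def hammingWt {F : Type*} [DecidableEq F] [Zero F] {N : ℕ} (e : Fin N → F) : ℕ :=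
  (Finset.univ.filter fun k => e k ≠ 0).card

theorem stmt4 {F : Type*} [Field F] [Fintype F] [DecidableEq F]
    {m n N : ℕ} (L : Matrix (Fin n) (Fin N) F)
    (χ : Fin m → Finset (Fin n)) (f : Fin m → Fin n)
    (hf : ∀ i, f i ∉ χ i) (δ : ℕ) :
    (∀ i : Fin m, ∀ z : Fin n → F, (∀ j ∈ χ i, z j = 0) → z (f i) ≠ 0 →
      ∀ e : Fin N → F, hammingWt e ≤ 2 * δ → z ᵥ* L + e ≠ 0) ↔
    (∀ z : Fin n → F,
      (∃ i : Fin m, (∀ j ∈ χ i, z j = 0) ∧ z (f i) ≠ 0) →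
        2 * δ + 1 ≤ hammingWt (z ᵥ* L)) := by
  have hneg : ∀ v : Fin N → F, hammingWt (-v) = hammingWt v := by
    intro v
    unfold hammingWt
    congr 1
    ext k
    simp [neg_eq_zero]
  constructor
  · intro h z ⟨i, hz, hzf⟩
    by_contra hlt
    push_neg at hlt
    exact h i z hz hzf (-(z ᵥ* L)) (by rw [hneg]; omega) (by simp)
  · intro h i z hz hzf e he heq
    have := h z ⟨i, hz, hzf⟩
    have : e = -(z ᵥ* L) := by
      have := heq
      linear_combination (norm := module) heq
    rw [this, hneg] at he
    omega
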